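/- arXiv:2006.03578 — 2 statements merged into one kernel-verified Lean document; each statement's English description precedes it below -/
import Mathlib

section
/- Let G be a (2P_2, \overline{P_2+P_3})-free, C_5-free atom containing an induced 4-cycle on vertices v_1,…,v_4. If x ∈ V_∅, then either x has at least two neighbours in V_{{1,3}} and no neighbour in V_{{2,4}}, or x has at least two neighbours in V_{{2,4}} and no neighbour in V_{{1,3}}; furthermore, in either case x is adjacent to every vertex of V_{{1,2,3,4}}. -/
open SimpleGraph

/-- The graph `2P₂`: two disjoint edges, on vertex set `Fin 4`. -/
def twoP2 : SimpleGraph (Fin 4) :=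
  SimpleGraph.fromRel (fun a b => (a = 0 ∧ b = 1) ∨ (a = 2 ∧ b = 3))

/-- The graph `P₂ + P₃`: disjoint union of a path on 2 vertices (0-1)
and a path on 3 vertices (2-3-4), on vertex set `Fin 5`. -/
def P2P3 : SimpleGraph (Fin 5) :=
  SimpleGraph.fromRel (fun a b => (a = 0 ∧ b = 1) ∨ (a = 2 ∧ b = 3) ∨ (a = 3 ∧ b = 4))

/-- `G` is `H`-free: `G` contains no induced subgraph isomorphic to `H`. -/
def Free {W V : Type*} (H : SimpleGraph W) (G : SimpleGraph V) : Prop :=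
  IsEmpty (H ↪g G)

/-- `G` has no clique cut-set: for every clique `K`, deleting the vertices of `K`
does not disconnect the graph.  A graph with this property is called an atom. -/
def NoCliqueCutset {V : Type*} (G : SimpleGraph V) : Prop :=
  ∀ K : Set V, G.IsClique K → (G.induce (Kᶜ : Set V)).Preconnected

/-- The 5-cycle `C₅` on vertex set `Fin 5`. -/
def C5 : SimpleGraph (Fin 5) :=
  SimpleGraph.fromRel (fun a b => b = a + 1)

/-- For `S ⊆ Fin 4`, the set of vertices `x` outside the cycle `v 0, …, v 3` whose
neighbourhood on the cycle is exactly `{v i : i ∈ S}`. -/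
def vSet {V : Type*} (G : SimpleGraph V) (v : Fin 4 → V) (S : Set (Fin 4)) : Set V :=
  {x | (∀ i, x ≠ v i) ∧ ∀ i, (G.Adj x (v i) ↔ i ∈ S)}

/-!
Write `A`, `B`, `U` for `vSet G v {0, 2}`, `vSet G v {1, 3}`, `vSet G v univ`. A neighbour `y`
of `x ∈ vSet G v ∅` meets every edge of the cycle (otherwise `x y` and that edge form a `2P₂`)
and does not see exactly three cycle vertices (co-`(P₂ + P₃)`), so `y ∈ A ∪ B ∪ U`. As `G` is
an atom, `N(x)` is not a clique. Two nonadjacent neighbours `y, y'` of `x` lie both in `A` or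
both in `B`: `U` is complete to `A ∪ B`, neighbours of `x` in `U` are pairwise adjacent, and
neighbours of `x` in `A` and `B` are adjacent (`C₅`). If `y, y' ∈ A`, a neighbour `z ∈ B` of
`x`, or a non-neighbour `w ∈ U` of `x`, gives a co-`(P₂ + P₃)` together with `y, y'`, `x` and
`v 0`. Rotating the cycle by one step exchanges `A` and `B`.
-/

section

open Function

variable {V : Type*} {G : SimpleGraph V}

theorem Free.false_of_adj_iff {W : Type*} {H : SimpleGraph W} (h : _root_.Free H G) (f : W → V)
    (hf : Injective f) (hadj : ∀ i j, G.Adj (f i) (f j) ↔ H.Adj i j) : False :=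
  h.false ⟨⟨f, hf⟩, hadj _ _⟩

theorem Free.adj_of_twoP2 (h : _root_.Free twoP2 G) {a b c d : V} (hab : G.Adj a b)
    (hcd : G.Adj c d) : G.Adj a c ∨ G.Adj a d ∨ G.Adj b c ∨ G.Adj b d := by
  by_contra! hn
  obtain ⟨hac, had, hbc, hbd⟩ := hn
  refine h.false_of_adj_iff ![a, b, c, d] ?_ ?_
  · intro i j hij
    fin_cases i <;> fin_cases j <;> simp_all [G.adj_comm]
  · intro i j
    fin_cases i <;> fin_cases j <;> simp_all [twoP2, G.adj_comm]

/-- In the complement, `a b` is the `P₂` and `c d e` is the `P₃`. -/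
theorem Free.adj_of_coP2P3 (h : _root_.Free (P2P3ᶜ) G) {a b c d e : V} (hab : a ≠ b)
    (hab' : ¬ G.Adj a b) (hac : G.Adj a c) (had : G.Adj a d) (hae : G.Adj a e)
    (hbc : G.Adj b c) (hbd : G.Adj b d) (hbe : G.Adj b e) (hce : G.Adj c e) :
    G.Adj c d ∨ G.Adj d e := by
  by_contra! hn
  obtain ⟨hcd, hde⟩ := hn
  refine h.false_of_adj_iff ![a, b, c, d, e] ?_ ?_
  · intro i j hij
    fin_cases i <;> fin_cases j <;> simp_all [G.adj_comm]
  · intro i j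
    fin_cases i <;> fin_cases j <;> simp_all [P2P3, G.adj_comm]

theorem Free.adj_of_C5 (h : _root_.Free C5 G) {a b c d e : V} (hab : G.Adj a b)
    (hbc : G.Adj b c) (hcd : G.Adj c d) (hac : ¬ G.Adj a c) (hbd : ¬ G.Adj b d)
    (hea : G.Adj e a) (hed : G.Adj e d) (heb : ¬ G.Adj e b) (hec : ¬ G.Adj e c) :
    G.Adj a d := by
  by_contra had
  refine h.false_of_adj_iff ![a, b, c, d, e] ?_ ?_
  · intro i j hij
    fin_cases i <;> fin_cases j <;> simp_all [G.adj_comm]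
  · intro i j
    fin_cases i <;> fin_cases j <;> simp_all [C5, G.adj_comm]

theorem NoCliqueCutset.not_isClique_neighborSet (h : NoCliqueCutset G) {x t : V} (hxt : x ≠ t)
    (hxt' : ¬ G.Adj x t) : ¬ G.IsClique (G.neighborSet x) := by
  intro hcl
  obtain ⟨w⟩ := h _ hcl ⟨x, by simp⟩ ⟨t, hxt'⟩
  have hnil : ¬ w.Nil := Walk.not_nil_of_ne (Subtype.coe_ne_coe.1 hxt)
  exact (w.getVert 1).2 (w.adj_snd hnil)

theorem Finset.eq_zero_two_or_eq_one_three_or_eq_univ (s : Finset (Fin 4))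
    (hcover : ∀ i, i ∈ s ∨ i + 1 ∈ s)
    (hthree : ∀ i, i ∈ s → i + 1 ∈ s → i + 2 ∈ s → i + 3 ∈ s) :
    s = {0, 2} ∨ s = {1, 3} ∨ s = univ := by
  revert s
  decide

theorem adj_of_mem_vSet {v : Fin 4 → V} {S : Set (Fin 4)} {x : V} (hx : x ∈ vSet G v S)
    {i : Fin 4} (hi : i ∈ S := by simp) : G.Adj x (v i) :=
  (hx.2 i).2 hi

theorem not_adj_of_mem_vSet {v : Fin 4 → V} {S : Set (Fin 4)} {x : V} (hx : x ∈ vSet G v S)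
    {i : Fin 4} (hi : i ∉ S := by simp) : ¬ G.Adj x (v i) :=
  mt (hx.2 i).1 hi

section rotation

variable (v : Fin 4 → V)

theorem vSet_comp_add (k : Fin 4) (S : Set (Fin 4)) :
    vSet G (fun i => v (k + i)) S = vSet G v ((k + ·) '' S) := by
  ext x
  refine and_congr ((Equiv.addLeft k).forall_congr fun {_} => Iff.rfl)
    ((Equiv.addLeft k).forall_congr fun {_} => ?_)
  simp

@[simp]
theorem vSet_one_add_empty : vSet G (fun i => v (1 + i)) ∅ = vSet G v ∅ := by
  simp [vSet_comp_add]

@[simp]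
theorem vSet_one_add_univ : vSet G (fun i => v (1 + i)) Set.univ = vSet G v Set.univ := by
  simp [vSet_comp_add, (add_left_surjective _).range_eq]

@[simp]
theorem vSet_one_add_zero_two : vSet G (fun i => v (1 + i)) {0, 2} = vSet G v {1, 3} := by
  simp [vSet_comp_add, Set.image_insert_eq]

@[simp]
theorem vSet_one_add_one_three : vSet G (fun i => v (1 + i)) {1, 3} = vSet G v {0, 2} := by
  simp [vSet_comp_add, Set.image_insert_eq, Set.pair_comm]

end rotation

structure IsInducedC4 (G : SimpleGraph V) (v : Fin 4 → V) : Prop where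
  injective : Injective v
  adj_iff (i j : Fin 4) : G.Adj (v i) (v j) ↔ (j = i + 1 ∨ i = j + 1)

namespace IsInducedC4

variable {v : Fin 4 → V}

theorem adj (hc : IsInducedC4 G v) {i j : Fin 4} (h : j = i + 1 ∨ i = j + 1 := by decide) :
    G.Adj (v i) (v j) :=
  (hc.adj_iff i j).2 h

theorem not_adj (hc : IsInducedC4 G v) {i j : Fin 4}
    (h : ¬ (j = i + 1 ∨ i = j + 1) := by decide) : ¬ G.Adj (v i) (v j) :=
  mt (hc.adj_iff i j).1 h

theorem ne (hc : IsInducedC4 G v) {i j : Fin 4} (h : i ≠ j := by decide) : v i ≠ v j :=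
  hc.injective.ne h

theorem rotate (hc : IsInducedC4 G v) (k : Fin 4) : IsInducedC4 G (fun i => v (k + i)) where
  injective := hc.injective.comp (add_right_injective k)
  adj_iff i j := by simp [hc.adj_iff, add_assoc]

theorem adj_three_of_adj_zero_one_two (hc : IsInducedC4 G v) (hfree : _root_.Free (P2P3ᶜ) G)
    {y : V} (h0 : G.Adj y (v 0)) (h1 : G.Adj y (v 1)) (h2 : G.Adj y (v 2)) : G.Adj y (v 3) :=
  (hfree.adj_of_coP2P3 (a := v 0) (b := v 2) (c := y) (d := v 3) (e := v 1) hc.ne hc.not_adj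
    h0.symm hc.adj hc.adj h2.symm hc.adj hc.adj h1).resolve_right hc.not_adj

theorem mem_vSet_of_adj (hc : IsInducedC4 G v) (hfree1 : _root_.Free twoP2 G)
    (hfree2 : _root_.Free (P2P3ᶜ) G) {x y : V} (hx : x ∈ vSet G v ∅) (hxy : G.Adj x y) :
    y ∈ vSet G v {0, 2} ∨ y ∈ vSet G v {1, 3} ∨ y ∈ vSet G v Set.univ := by
  have hxv (i : Fin 4) : ¬ G.Adj x (v i) := not_adj_of_mem_vSet hx
  have hyv (i : Fin 4) : y ≠ v i := by
    rintro rfl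
    exact hxv i hxy
  have hcover (i : Fin 4) : G.Adj y (v i) ∨ G.Adj y (v (i + 1)) := by
    simpa [hxv] using hfree1.adj_of_twoP2 hxy (hc.adj (i := i) (j := i + 1) (.inl rfl))
  have hthree (i : Fin 4) (h0 : G.Adj y (v i)) (h1 : G.Adj y (v (i + 1)))
      (h2 : G.Adj y (v (i + 2))) : G.Adj y (v (i + 3)) :=
    (hc.rotate i).adj_three_of_adj_zero_one_two hfree2 (by simpa) h1 h2
  classical
  rcases Finset.eq_zero_two_or_eq_one_three_or_eq_univ {i | G.Adj y (v i)}
    (by simpa using hcover) (by simpa using hthree) with h | h | h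
  · exact .inl ⟨hyv, fun i => by simpa using Finset.ext_iff.1 h i⟩
  · exact .inr (.inl ⟨hyv, fun i => by simpa using Finset.ext_iff.1 h i⟩)
  · exact .inr (.inr ⟨hyv, fun i => by simpa using Finset.ext_iff.1 h i⟩)

theorem adj_of_mem_vSet_zero_two_of_mem_vSet_univ (hc : IsInducedC4 G v)
    (hfree : _root_.Free (P2P3ᶜ) G) ⦃y u : V⦄ (hy : y ∈ vSet G v {0, 2})
    (hu : u ∈ vSet G v Set.univ) : G.Adj y u :=
  ((hfree.adj_of_coP2P3 (a := v 0) (b := v 2) (c := u) (d := y) (e := v 1) hc.ne hc.not_adj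
    (adj_of_mem_vSet hu).symm (adj_of_mem_vSet hy).symm hc.adj (adj_of_mem_vSet hu).symm
    (adj_of_mem_vSet hy).symm hc.adj (adj_of_mem_vSet hu)).resolve_right
    (not_adj_of_mem_vSet hy)).symm

theorem adj_of_mem_vSet_one_three_of_mem_vSet_univ (hc : IsInducedC4 G v)
    (hfree : _root_.Free (P2P3ᶜ) G) ⦃y u : V⦄ (hy : y ∈ vSet G v {1, 3})
    (hu : u ∈ vSet G v Set.univ) : G.Adj y u :=
  (hc.rotate 1).adj_of_mem_vSet_zero_two_of_mem_vSet_univ hfree (by simpa using hy)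
    (by simpa using hu)

theorem adj_of_mem_vSet_zero_two_of_mem_vSet_one_three (hc : IsInducedC4 G v)
    (hfree : _root_.Free C5 G) {x : V} (hx : x ∈ vSet G v ∅) ⦃y z : V⦄
    (hy : y ∈ vSet G v {0, 2}) (hz : z ∈ vSet G v {1, 3}) (hxy : G.Adj x y) (hxz : G.Adj x z) :
    G.Adj y z :=
  hfree.adj_of_C5 (a := y) (b := v 0) (c := v 3) (d := z) (e := x) (adj_of_mem_vSet hy) hc.adj
    (adj_of_mem_vSet hz).symm (not_adj_of_mem_vSet hy)
    ((not_adj_of_mem_vSet hz : ¬ G.Adj z (v 0)) ·.symm) hxy hxz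
    (not_adj_of_mem_vSet hx) (not_adj_of_mem_vSet hx)

theorem adj_of_mem_vSet_univ (hc : IsInducedC4 G v) (hfree : _root_.Free (P2P3ᶜ) G)
    {x u u' : V} (hx : x ∈ vSet G v ∅) (hu : u ∈ vSet G v Set.univ)
    (hu' : u' ∈ vSet G v Set.univ) (hxu : G.Adj x u) (hxu' : G.Adj x u') (hne : u ≠ u') :
    G.Adj u u' := by
  by_contra huu'
  rcases hfree.adj_of_coP2P3 (c := v 0) (d := x) (e := v 1) hne huu' (adj_of_mem_vSet hu)
    hxu.symm (adj_of_mem_vSet hu) (adj_of_mem_vSet hu') hxu'.symm (adj_of_mem_vSet hu')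
    hc.adj with h | h
  · exact (not_adj_of_mem_vSet hx : ¬ G.Adj x (v 0)) h.symm
  · exact (not_adj_of_mem_vSet hx : ¬ G.Adj x (v 1)) h

theorem mem_vSet_of_not_adj (hc : IsInducedC4 G v) (hfree1 : _root_.Free twoP2 G)
    (hfree2 : _root_.Free (P2P3ᶜ) G) (hfree3 : _root_.Free C5 G) {x y y' : V}
    (hx : x ∈ vSet G v ∅) (hxy : G.Adj x y) (hxy' : G.Adj x y') (hne : y ≠ y')
    (hyy' : ¬ G.Adj y y') :
    (y ∈ vSet G v {0, 2} ∧ y' ∈ vSet G v {0, 2}) ∨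
      (y ∈ vSet G v {1, 3} ∧ y' ∈ vSet G v {1, 3}) := by
  have hAU := hc.adj_of_mem_vSet_zero_two_of_mem_vSet_univ hfree2
  have hBU := hc.adj_of_mem_vSet_one_three_of_mem_vSet_univ hfree2
  have hAB := hc.adj_of_mem_vSet_zero_two_of_mem_vSet_one_three hfree3 hx
  rcases hc.mem_vSet_of_adj hfree1 hfree2 hx hxy with hy | hy | hy <;>
    rcases hc.mem_vSet_of_adj hfree1 hfree2 hx hxy' with hy' | hy' | hy'
  · exact .inl ⟨hy, hy'⟩
  · exact absurd (hAB hy hy' hxy hxy') hyy'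
  · exact absurd (hAU hy hy') hyy'
  · exact absurd (hAB hy' hy hxy' hxy).symm hyy'
  · exact .inr ⟨hy, hy'⟩
  · exact absurd (hBU hy hy') hyy'
  · exact absurd (hAU hy' hy).symm hyy'
  · exact absurd (hBU hy' hy).symm hyy'
  · exact absurd (hc.adj_of_mem_vSet_univ hfree2 hx hy hy' hxy hxy' hne) hyy'

theorem not_adj_and_adj_of_not_adj_of_mem_vSet_zero_two (hc : IsInducedC4 G v)
    (hfree2 : _root_.Free (P2P3ᶜ) G) (hfree3 : _root_.Free C5 G) {x y y' : V}
    (hx : x ∈ vSet G v ∅) (hy : y ∈ vSet G v {0, 2}) (hy' : y' ∈ vSet G v {0, 2})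
    (hxy : G.Adj x y) (hxy' : G.Adj x y') (hne : y ≠ y') (hyy' : ¬ G.Adj y y') :
    (∀ z ∈ vSet G v {1, 3}, ¬ G.Adj x z) ∧ ∀ w ∈ vSet G v Set.univ, G.Adj x w := by
  have hxv : ¬ G.Adj x (v 0) := not_adj_of_mem_vSet hx
  refine ⟨fun z hz hxz => ?_, fun w hw => ?_⟩
  · have hAB := hc.adj_of_mem_vSet_zero_two_of_mem_vSet_one_three hfree3 hx
    rcases hfree2.adj_of_coP2P3 (c := x) (d := v 0) (e := z) hne hyy' hxy.symm
      (adj_of_mem_vSet hy) (hAB hy hz hxy hxz) hxy'.symm (adj_of_mem_vSet hy')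
      (hAB hy' hz hxy' hxz) hxz with h | h
    · exact hxv h
    · exact (not_adj_of_mem_vSet hz : ¬ G.Adj z (v 0)) h.symm
  · have hAU := hc.adj_of_mem_vSet_zero_two_of_mem_vSet_univ hfree2
    exact ((hfree2.adj_of_coP2P3 (c := w) (d := x) (e := v 0) hne hyy' (hAU hy hw) hxy.symm
      (adj_of_mem_vSet hy) (hAU hy' hw) hxy'.symm (adj_of_mem_vSet hy')
      (adj_of_mem_vSet hw)).resolve_right hxv).symm

theorem not_adj_and_adj_of_not_adj_of_mem_vSet_one_three (hc : IsInducedC4 G v)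
    (hfree2 : _root_.Free (P2P3ᶜ) G) (hfree3 : _root_.Free C5 G) {x y y' : V}
    (hx : x ∈ vSet G v ∅) (hy : y ∈ vSet G v {1, 3}) (hy' : y' ∈ vSet G v {1, 3})
    (hxy : G.Adj x y) (hxy' : G.Adj x y') (hne : y ≠ y') (hyy' : ¬ G.Adj y y') :
    (∀ z ∈ vSet G v {0, 2}, ¬ G.Adj x z) ∧ ∀ w ∈ vSet G v Set.univ, G.Adj x w := by
  simpa using (hc.rotate 1).not_adj_and_adj_of_not_adj_of_mem_vSet_zero_two hfree2 hfree3
    (by simpa using hx) (by simpa using hy) (by simpa using hy') hxy hxy' hne hyy'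

end IsInducedC4

end

theorem clm_C4_V0_nice_nbhd_general {V : Type*} (G : SimpleGraph V)
    (hfree1 : _root_.Free twoP2 G) (hfree2 : _root_.Free (P2P3ᶜ) G) (hfree3 : _root_.Free C5 G)
    (hatom : NoCliqueCutset G)
    (v : Fin 4 → V) (hv : Function.Injective v)
    (hC : ∀ i j : Fin 4, G.Adj (v i) (v j) ↔ (j = i + 1 ∨ i = j + 1)) :
    ∀ x ∈ vSet G v (∅ : Set (Fin 4)),
      (((∃ y ∈ vSet G v ({0, 2} : Set (Fin 4)), ∃ y' ∈ vSet G v ({0, 2} : Set (Fin 4)),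
          y ≠ y' ∧ G.Adj x y ∧ G.Adj x y') ∧
        (∀ z ∈ vSet G v ({1, 3} : Set (Fin 4)), ¬ G.Adj x z)) ∨
       ((∃ y ∈ vSet G v ({1, 3} : Set (Fin 4)), ∃ y' ∈ vSet G v ({1, 3} : Set (Fin 4)),
          y ≠ y' ∧ G.Adj x y ∧ G.Adj x y') ∧
        (∀ z ∈ vSet G v ({0, 2} : Set (Fin 4)), ¬ G.Adj x z))) ∧
      (∀ w ∈ vSet G v (Set.univ : Set (Fin 4)), G.Adj x w) := by
  intro x hx
  have hc : IsInducedC4 G v := ⟨hv, hC⟩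
  obtain ⟨y, hxy, y', hxy', hne, hyy'⟩ :
      ∃ y, G.Adj x y ∧ ∃ y', G.Adj x y' ∧ y ≠ y' ∧ ¬ G.Adj y y' := by
    simpa [isClique_iff, Set.Pairwise] using
      hatom.not_isClique_neighborSet (hx.1 0) (not_adj_of_mem_vSet hx)
  rcases hc.mem_vSet_of_not_adj hfree1 hfree2 hfree3 hx hxy hxy' hne hyy' with
    ⟨hy, hy'⟩ | ⟨hy, hy'⟩
  · obtain ⟨hB, hU⟩ := hc.not_adj_and_adj_of_not_adj_of_mem_vSet_zero_two hfree2 hfree3 hx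
      hy hy' hxy hxy' hne hyy'
    exact ⟨.inl ⟨⟨y, hy, y', hy', hne, hxy, hxy'⟩, hB⟩, hU⟩
  · obtain ⟨hA, hU⟩ := hc.not_adj_and_adj_of_not_adj_of_mem_vSet_one_three hfree2 hfree3 hx
      hy hy' hxy hxy' hne hyy'
    exact ⟨.inr ⟨⟨y, hy, y', hy', hne, hxy, hxy'⟩, hA⟩, hU⟩

theorem clm_C4_V0_nice_nbhd {V : Type*} [Fintype V] (G : SimpleGraph V)
    (hfree1 : _root_.Free twoP2 G) (hfree2 : _root_.Free (P2P3ᶜ) G) (hfree3 : _root_.Free C5 G)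
    (hatom : NoCliqueCutset G)
    (v : Fin 4 → V) (hv : Function.Injective v)
    (hC : ∀ i j : Fin 4, G.Adj (v i) (v j) ↔ (j = i + 1 ∨ i = j + 1)) :
    ∀ x ∈ vSet G v (∅ : Set (Fin 4)),
      (((∃ y ∈ vSet G v ({0, 2} : Set (Fin 4)), ∃ y' ∈ vSet G v ({0, 2} : Set (Fin 4)),
          y ≠ y' ∧ G.Adj x y ∧ G.Adj x y') ∧
        (∀ z ∈ vSet G v ({1, 3} : Set (Fin 4)), ¬ G.Adj x z)) ∨
       ((∃ y ∈ vSet G v ({1, 3} : Set (Fin 4)), ∃ y' ∈ vSet G v ({1, 3} : Set (Fin 4)),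
          y ≠ y' ∧ G.Adj x y ∧ G.Adj x y') ∧
        (∀ z ∈ vSet G v ({0, 2} : Set (Fin 4)), ¬ G.Adj x z))) ∧
      (∀ w ∈ vSet G v (Set.univ : Set (Fin 4)), G.Adj x w) :=
  clm_C4_V0_nice_nbhd_general G hfree1 hfree2 hfree3 hatom v hv hC
end

section
/- Let G be a (2P_2, \overline{P_2+P_3})-free, C_5-free atom containing an induced 4-cycle on vertices v_1,…,v_4. Then for i ∈ {1,2}, the set V_{{i,i+1}} ∪ V_{{i+2,i+3}} contains at most two vertices. -/
open SimpleGraph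

/-!
Rotating the cycle, it suffices to show that `vSet G v {0, 1}` has at most one vertex. Two
vertices `a ≠ b` of it are nonadjacent (else `ab, v₂v₃` is a `2P₂`). Excluding `2P₂`, `C₅` and
the complement of `P₂ + P₃` then forces every neighbour of `a` other than `v₀, v₁` to be adjacent
to `v₀`, `v₁` and to one of `v₂, v₃`, and any two such neighbours to be adjacent, so `N(a)` is a
clique. But `N(a)` separates `a` from `b`, contradicting that `G` is an atom.
-/

theorem Free.false_of_induced {W V : Type*} {H : SimpleGraph W} {G : SimpleGraph V}
    (h : _root_.Free H G) {f : W → V} (hf : Function.Injective f)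
    (hadj : ∀ a b, G.Adj (f a) (f b) ↔ H.Adj a b) : False :=
  h.false ⟨⟨f, hf⟩, hadj _ _⟩

section Patterns

variable {V : Type*} {G : SimpleGraph V}

theorem Free.false_of_twoP2 (h : _root_.Free twoP2 G) {x₀ x₁ x₂ x₃ : V}
    (h₀₁ : G.Adj x₀ x₁) (h₂₃ : G.Adj x₂ x₃)
    (h₀₂ : ¬G.Adj x₀ x₂) (h₀₃ : ¬G.Adj x₀ x₃) (h₁₂ : ¬G.Adj x₁ x₂) (h₁₃ : ¬G.Adj x₁ x₃) :
    False := by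
  have := h₀₁.ne; have := h₂₃.ne
  refine h.false_of_induced (f := ![x₀, x₁, x₂, x₃]) ?_ ?_
  · intro a b hab
    fin_cases a <;> fin_cases b <;> simp_all [G.adj_comm]
  · intro a b
    fin_cases a <;> fin_cases b <;> simp_all [twoP2, G.adj_comm]

-- `x₀` and `x₁` are twins here, so unlike the other vertices their distinctness is not forced
-- by the adjacencies.
theorem Free.false_of_compl_P2P3 (h : _root_.Free P2P3ᶜ G) {x₀ x₁ x₂ x₃ x₄ : V} (hne : x₀ ≠ x₁)
    (h₀₁ : ¬G.Adj x₀ x₁) (h₂₃ : ¬G.Adj x₂ x₃) (h₃₄ : ¬G.Adj x₃ x₄)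
    (h₀₂ : G.Adj x₀ x₂) (h₀₃ : G.Adj x₀ x₃) (h₀₄ : G.Adj x₀ x₄)
    (h₁₂ : G.Adj x₁ x₂) (h₁₃ : G.Adj x₁ x₃) (h₁₄ : G.Adj x₁ x₄) (h₂₄ : G.Adj x₂ x₄) :
    False := by
  have := h₀₂.ne; have := h₀₃.ne; have := h₀₄.ne; have := h₁₂.ne; have := h₁₃.ne
  have := h₁₄.ne; have := h₂₄.ne
  refine h.false_of_induced (f := ![x₀, x₁, x₂, x₃, x₄]) ?_ ?_
  · intro a b hab
    fin_cases a <;> fin_cases b <;> simp_all [G.adj_comm]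
  · intro a b
    fin_cases a <;> fin_cases b <;> simp_all [P2P3, G.adj_comm]

theorem Free.false_of_C5 (h : _root_.Free C5 G) {x₀ x₁ x₂ x₃ x₄ : V}
    (h₀₁ : G.Adj x₀ x₁) (h₁₂ : G.Adj x₁ x₂) (h₂₃ : G.Adj x₂ x₃) (h₃₄ : G.Adj x₃ x₄)
    (h₄₀ : G.Adj x₄ x₀) (h₀₂ : ¬G.Adj x₀ x₂) (h₀₃ : ¬G.Adj x₀ x₃) (h₁₃ : ¬G.Adj x₁ x₃)
    (h₁₄ : ¬G.Adj x₁ x₄) (h₂₄ : ¬G.Adj x₂ x₄) : False := by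
  have := h₀₁.ne; have := h₁₂.ne; have := h₂₃.ne; have := h₃₄.ne; have := h₄₀.ne
  refine h.false_of_induced (f := ![x₀, x₁, x₂, x₃, x₄]) ?_ ?_
  · intro a b hab
    fin_cases a <;> fin_cases b <;> simp_all [G.adj_comm]
  · intro a b
    fin_cases a <;> fin_cases b <;> simp_all [C5, G.adj_comm]

end Patterns

theorem NoCliqueCutset.adj_of_isClique_neighborSet {V : Type*} {G : SimpleGraph V}
    (hG : NoCliqueCutset G) {a b : V} (hK : G.IsClique (G.neighborSet a)) (hab : a ≠ b) :
    G.Adj a b := by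
  by_contra hb
  obtain ⟨p⟩ := hG _ hK (⟨a, G.irrefl⟩ : ((G.neighborSet a)ᶜ : Set V)) ⟨b, hb⟩
  have hp : ¬p.Nil := SimpleGraph.Walk.not_nil_of_ne (Subtype.coe_ne_coe.mp hab)
  exact p.snd.2 (by simpa using p.adj_snd hp)

theorem Set.Subsingleton.ncard_le_one {α : Type*} {s : Set α} (hs : s.Subsingleton) :
    s.ncard ≤ 1 :=
  have := hs.finite.to_subtype
  Set.ncard_le_one_iff_subsingleton.2 hs

theorem vSet_comp_equiv {V : Type*} (G : SimpleGraph V) (v : Fin 4 → V) (e : Fin 4 ≃ Fin 4)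
    (S : Set (Fin 4)) : vSet G (v ∘ e) (e ⁻¹' S) = vSet G v S := by
  ext x
  exact and_congr (e.forall_congr_right (q := fun i => x ≠ v i))
    (e.forall_congr_right (q := fun i => G.Adj x (v i) ↔ i ∈ S))

def IsInducedC4_s15 {V : Type*} (G : SimpleGraph V) (v : Fin 4 → V) : Prop :=
  ∀ i j : Fin 4, G.Adj (v i) (v j) ↔ (j = i + 1 ∨ i = j + 1)

namespace IsInducedC4_s15

variable {V : Type*} {G : SimpleGraph V} {v : Fin 4 → V}

theorem comp_addRight (hC : IsInducedC4_s15 G v) (k : Fin 4) :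
    IsInducedC4_s15 G (v ∘ Equiv.addRight k) := by
  intro i j
  rw [Function.comp_apply, Function.comp_apply, Equiv.coe_addRight, hC, add_right_comm i,
    add_right_comm j, add_left_inj, add_left_inj]

theorem adj_and_not_adj (hC : IsInducedC4_s15 G v) :
    G.Adj (v 0) (v 1) ∧ G.Adj (v 1) (v 2) ∧ G.Adj (v 2) (v 3) ∧ G.Adj (v 3) (v 0) ∧
      ¬G.Adj (v 0) (v 2) ∧ ¬G.Adj (v 1) (v 3) := by
  unfold IsInducedC4_s15 at hC
  simp only [hC]
  decide

end IsInducedC4_s15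

theorem adj_and_not_adj_of_mem_vSet_zero_one {V : Type*} {G : SimpleGraph V} {v : Fin 4 → V}
    {a : V} (ha : a ∈ vSet G v {0, 1}) :
    G.Adj a (v 0) ∧ G.Adj a (v 1) ∧ ¬G.Adj a (v 2) ∧ ¬G.Adj a (v 3) := by
  have h := ha.2
  refine ⟨(h 0).2 (by simp), (h 1).2 (by simp), fun h₂ => ?_, fun h₃ => ?_⟩
  · simpa using (h 2).1 h₂
  · simpa using (h 3).1 h₃

section NeighbourhoodOfV01

variable {V : Type*} {G : SimpleGraph V} {v : Fin 4 → V} {a b : V}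

theorem not_adj_of_mem_vSet_zero_one (h2P2 : _root_.Free twoP2 G) (hC : IsInducedC4_s15 G v)
    (ha : a ∈ vSet G v {0, 1}) (hb : b ∈ vSet G v {0, 1}) : ¬G.Adj a b := fun hab => by
  obtain ⟨-, -, a₂, a₃⟩ := adj_and_not_adj_of_mem_vSet_zero_one ha
  obtain ⟨-, -, b₂, b₃⟩ := adj_and_not_adj_of_mem_vSet_zero_one hb
  exact h2P2.false_of_twoP2 hab hC.adj_and_not_adj.2.2.1 a₂ a₃ b₂ b₃

theorem adj_of_adj_of_mem_vSet_zero_one (h2P2 : _root_.Free twoP2 G)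
    (hP2P3 : _root_.Free P2P3ᶜ G) (hC5 : _root_.Free C5 G) (hC : IsInducedC4_s15 G v)
    (ha : a ∈ vSet G v {0, 1}) (hb : b ∈ vSet G v {0, 1}) (hab : a ≠ b) {u : V}
    (hu : G.Adj a u) (hu₀ : u ≠ v 0) (hu₁ : u ≠ v 1) :
    G.Adj u (v 0) ∧ G.Adj u (v 1) ∧ (G.Adj u (v 2) ∨ G.Adj u (v 3)) := by
  obtain ⟨c₀₁, c₁₂, c₂₃, c₃₀, n₀₂, n₁₃⟩ := hC.adj_and_not_adj
  obtain ⟨a₀, a₁, a₂, a₃⟩ := adj_and_not_adj_of_mem_vSet_zero_one ha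
  obtain ⟨b₀, b₁, b₂, b₃⟩ := adj_and_not_adj_of_mem_vSet_zero_one hb
  have nab := not_adj_of_mem_vSet_zero_one h2P2 hC ha hb
  have h₂₃ : G.Adj u (v 2) ∨ G.Adj u (v 3) := by
    by_contra! h
    exact h2P2.false_of_twoP2 hu c₂₃ a₂ a₃ h.1 h.2
  have h₀₂ : G.Adj u (v 0) → G.Adj u (v 2) → G.Adj u (v 1) := fun h₀ h₂ => by
    by_contra h₁
    exact hP2P3.false_of_compl_P2P3 hu₁ h₁ a₂ (G.adj_symm.mt n₀₂) hu.symm h₂ h₀ a₁.symm c₁₂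
      c₀₁.symm a₀
  have h₁₃ : G.Adj u (v 1) → G.Adj u (v 3) → G.Adj u (v 0) := fun h₁ h₃ => by
    by_contra h₀
    exact hP2P3.false_of_compl_P2P3 hu₀ h₀ a₃ (G.adj_symm.mt n₁₃) hu.symm h₃ h₁ a₀.symm c₃₀.symm
      c₀₁ a₁
  have h₂ : G.Adj u (v 2) → G.Adj u (v 0) ∨ G.Adj u (v 3) := fun h₂ => by
    by_contra! h
    exact hC5.false_of_C5 hu h₂ c₂₃ c₃₀ a₀.symm a₂ a₃ h.2 h.1 (G.adj_symm.mt n₀₂)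
  have h₃ : G.Adj u (v 3) → G.Adj u (v 1) ∨ G.Adj u (v 2) := fun h₃ => by
    by_contra! h
    exact hC5.false_of_C5 hu h₃ c₂₃.symm c₁₂.symm a₁.symm a₃ a₂ h.2 h.1 (G.adj_symm.mt n₁₃)
  have h₂' : G.Adj u (v 2) → G.Adj u (v 0) ∨ G.Adj u (v 1) := fun h₂ => by
    by_contra! h
    have hub : G.Adj u b := by
      by_contra hub
      exact h2P2.false_of_twoP2 b₀ h₂ (G.adj_symm.mt hub) b₂ (G.adj_symm.mt h.1) n₀₂
    exact hP2P3.false_of_compl_P2P3 hab nab (G.adj_symm.mt h.1) h.2 a₀ hu a₁ b₀ hub.symm b₁ c₀₁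
  tauto

theorem adj_neighbours_of_mem_vSet_zero_one (hP2P3 : _root_.Free P2P3ᶜ G)
    (hC5 : _root_.Free C5 G) (hC : IsInducedC4_s15 G v) (ha : a ∈ vSet G v {0, 1}) {w w' : V}
    (hw : G.Adj a w) (hw' : G.Adj a w') (hne : w ≠ w')
    (hw₀ : G.Adj w (v 0)) (hw₁ : G.Adj w (v 1)) (hw₂₃ : G.Adj w (v 2) ∨ G.Adj w (v 3))
    (hw'₀ : G.Adj w' (v 0)) (hw'₁ : G.Adj w' (v 1)) (hw'₂₃ : G.Adj w' (v 2) ∨ G.Adj w' (v 3)) :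
    G.Adj w w' := by
  obtain ⟨-, -, c₂₃, -, n₀₂, n₁₃⟩ := hC.adj_and_not_adj
  obtain ⟨a₀, a₁, a₂, a₃⟩ := adj_and_not_adj_of_mem_vSet_zero_one ha
  by_contra hn
  have h₂ : ¬(G.Adj w (v 2) ∧ G.Adj w' (v 2)) := fun h => hP2P3.false_of_compl_P2P3 hne hn a₂
    (G.adj_symm.mt n₀₂) hw.symm h.1 hw₀ hw'.symm h.2 hw'₀ a₀
  have h₃ : ¬(G.Adj w (v 3) ∧ G.Adj w' (v 3)) := fun h => hP2P3.false_of_compl_P2P3 hne hn a₃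
    (G.adj_symm.mt n₁₃) hw.symm h.1 hw₁ hw'.symm h.2 hw'₁ a₁
  have h₂₃ : ∀ x y, G.Adj a x → G.Adj a y → ¬G.Adj x y → G.Adj x (v 2) → G.Adj y (v 3) →
      G.Adj x (v 3) ∨ G.Adj y (v 2) := fun x y hx hy hxy hx₂ hy₃ => by
    by_contra! h
    exact hC5.false_of_C5 hx hx₂ c₂₃ hy₃.symm hy.symm a₂ a₃ h.1 hxy (G.adj_symm.mt h.2)
  have := h₂₃ w w' hw hw' hn
  have := h₂₃ w' w hw' hw (G.adj_symm.mt hn)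
  tauto

theorem isClique_neighborSet_of_mem_vSet_zero_one (h2P2 : _root_.Free twoP2 G)
    (hP2P3 : _root_.Free P2P3ᶜ G) (hC5 : _root_.Free C5 G) (hC : IsInducedC4_s15 G v)
    (ha : a ∈ vSet G v {0, 1}) (hb : b ∈ vSet G v {0, 1}) (hab : a ≠ b) :
    G.IsClique (G.neighborSet a) := by
  have c₀₁ := hC.adj_and_not_adj.1
  have key : ∀ u, G.Adj a u → u = v 0 ∨ u = v 1 ∨
      (G.Adj u (v 0) ∧ G.Adj u (v 1) ∧ (G.Adj u (v 2) ∨ G.Adj u (v 3))) := fun u hu => by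
    by_cases hu₀ : u = v 0; · exact .inl hu₀
    by_cases hu₁ : u = v 1; · exact .inr (.inl hu₁)
    exact .inr (.inr (adj_of_adj_of_mem_vSet_zero_one h2P2 hP2P3 hC5 hC ha hb hab hu hu₀ hu₁))
  intro w hw w' hw' hne
  rcases key w hw with rfl | rfl | ⟨hw₀, hw₁, hw₂₃⟩ <;>
    rcases key w' hw' with rfl | rfl | ⟨hw'₀, hw'₁, hw'₂₃⟩
  all_goals first
    | exact absurd rfl hne
    | assumption
    | exact c₀₁ | exact c₀₁.symm
    | exact G.adj_symm ‹_›
    | exact adj_neighbours_of_mem_vSet_zero_one hP2P3 hC5 hC ha hw hw' hne hw₀ hw₁ hw₂₃ hw'₀ hw'₁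
        hw'₂₃

theorem vSet_zero_one_subsingleton (h2P2 : _root_.Free twoP2 G) (hP2P3 : _root_.Free P2P3ᶜ G)
    (hC5 : _root_.Free C5 G) (hG : NoCliqueCutset G) (hC : IsInducedC4_s15 G v) :
    (vSet G v {0, 1}).Subsingleton := fun a ha b hb => by
  by_contra hab
  exact not_adj_of_mem_vSet_zero_one h2P2 hC ha hb <| hG.adj_of_isClique_neighborSet
    (isClique_neighborSet_of_mem_vSet_zero_one h2P2 hP2P3 hC5 hC ha hb hab) hab

end NeighbourhoodOfV01

theorem clm_C4_V12_V34_small_general {V : Type*} (G : SimpleGraph V)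
    (hfree1 : _root_.Free twoP2 G) (hfree2 : _root_.Free (P2P3ᶜ) G) (hfree3 : _root_.Free C5 G)
    (hatom : NoCliqueCutset G)
    (v : Fin 4 → V)
    (hC : ∀ i j : Fin 4, G.Adj (v i) (v j) ↔ (j = i + 1 ∨ i = j + 1)) :
    ∀ i : Fin 4,
      (vSet G v {i, i + 1} ∪ vSet G v {i + 2, i + 3}).ncard ≤ 2 := by
  have hsub (k : Fin 4) : (vSet G v {k, k + 1}).Subsingleton := by
    have hpre : Equiv.addRight k ⁻¹' {k, k + 1} = {0, 1} := by
      ext j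
      simp [add_comm j k]
    rw [← vSet_comp_equiv G v (Equiv.addRight k), hpre]
    exact vSet_zero_one_subsingleton hfree1 hfree2 hfree3 hatom (IsInducedC4_s15.comp_addRight hC k)
  intro i
  have h₂₃ : i + 3 = i + 2 + 1 := by rw [add_assoc]; rfl
  calc (vSet G v {i, i + 1} ∪ vSet G v {i + 2, i + 3}).ncard
      ≤ (vSet G v {i, i + 1}).ncard + (vSet G v {i + 2, i + 2 + 1}).ncard :=
        h₂₃ ▸ Set.ncard_union_le _ _
    _ ≤ 1 + 1 := add_le_add (hsub i).ncard_le_one (hsub (i + 2)).ncard_le_one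

theorem clm_C4_V12_V34_small {V : Type*} [Fintype V] (G : SimpleGraph V)
    (hfree1 : _root_.Free twoP2 G) (hfree2 : _root_.Free (P2P3ᶜ) G) (hfree3 : _root_.Free C5 G)
    (hatom : NoCliqueCutset G)
    (v : Fin 4 → V) (hv : Function.Injective v)
    (hC : ∀ i j : Fin 4, G.Adj (v i) (v j) ↔ (j = i + 1 ∨ i = j + 1)) :
    ∀ i : Fin 4,
      (vSet G v {i, i + 1} ∪ vSet G v {i + 2, i + 3}).ncard ≤ 2 :=
  clm_C4_V12_V34_small_general G hfree1 hfree2 hfree3 hatom v hC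
end
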